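/- arXiv:2302.11425 — 2 statements merged into one kernel-verified Lean document; each statement's English description precedes it below -/
import Mathlib

section
/- Let v be a henselian valuation on a field K with residue field Kv of characteristic different from 2. Then s(K) = s(Kv). -/
/-- `a` is a sum of `n` squares in `R`. -/
def IsSumSqN {R : Type*} [CommRing R] (n : ℕ) (a : R) : Prop :=
  ∃ x : Fin n → R, a = ∑ i, x i ^ 2

/-- `a` is a sum of squares in `R`. -/
def IsSOS {R : Type*} [CommRing R] (a : R) : Prop := ∃ n, IsSumSqN n a

/-- The level `s(R)`. -/
noncomputable def levelN (R : Type*) [CommRing R] : ℕ∞ :=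
  sInf {n : ℕ∞ | ∃ m : ℕ, (m : ℕ∞) = n ∧ IsSumSqN m (-1 : R)}

/-- The Pythagoras number `p(R)`. -/
noncomputable def pythNum (R : Type*) [CommRing R] : ℕ∞ :=
  sInf {n : ℕ∞ | ∃ m : ℕ, (m : ℕ∞) = n ∧ ∀ a : R, IsSOS a → IsSumSqN m a}

open Classical in
/-- The modified Pythagoras number `p'(R)`. -/
noncomputable def pythNum' (R : Type*) [CommRing R] : ℕ∞ :=
  if ¬ IsSOS (-1 : R) ∨ ringChar R = 2 then pythNum R else levelN R + 1

/-!
A sum of `m` squares equal to `-1` is the same as a nontrivial zero of the form `x₀² + ⋯ + xₘ²`.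
Over a valuation ring such a zero can be rescaled by its coordinate of largest value so that it
becomes integral with a coordinate equal to `1`, and then it reduces to a nontrivial zero over the
residue field; this gives `s(Kv) ≤ s(K)` for every valuation. Conversely, lift a representation
`-1 = ∑ ȳᵢ²` in the residue field to `a = -∑ xᵢ²` with `a ≡ 1`; as `2` is a unit, Hensel's lemma
applied to `X² - a` makes `a = b²`, whence `-1 = ∑ (xᵢ / b)²`.
-/

open IsLocalRing Polynomial

theorem IsSumSqN.map {R S : Type*} [CommRing R] [CommRing S] (f : R →+* S) {m : ℕ} {a : R}
    (h : IsSumSqN m a) : IsSumSqN m (f a) := by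
  obtain ⟨x, rfl⟩ := h
  exact ⟨f ∘ x, by simp⟩

theorem levelN_congr {R S : Type*} [CommRing R] [CommRing S]
    (h : ∀ m, IsSumSqN m (-1 : R) ↔ IsSumSqN m (-1 : S)) : levelN R = levelN S := by
  simp only [levelN, h]

theorem exists_sum_sq_eq_zero_of_isSumSqN_neg_one {R : Type*} [CommRing R] [Nontrivial R]
    {m : ℕ} (h : IsSumSqN m (-1 : R)) :
    ∃ y : Fin (m + 1) → R, y ≠ 0 ∧ ∑ i, y i ^ 2 = 0 := by
  obtain ⟨x, hx⟩ := h
  refine ⟨Fin.cons 1 x, fun h0 => one_ne_zero (congrFun h0 0), ?_⟩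
  rw [Fin.sum_univ_succ]
  simp [← hx]

theorem isSumSqN_neg_one_of_sum_sq_eq_zero {F : Type*} [Field F] {m : ℕ}
    {y : Fin (m + 1) → F} (hy : y ≠ 0) (h : ∑ i, y i ^ 2 = 0) : IsSumSqN m (-1 : F) := by
  obtain ⟨j, hj : y j ≠ 0⟩ := Function.ne_iff.mp hy
  refine ⟨fun k => y (j.succAbove k) / y j, ?_⟩
  rw [Fin.sum_univ_succAbove _ j] at h
  simp only [div_pow, ← Finset.sum_div]
  rw [eq_neg_of_add_eq_zero_right h, neg_div, div_self (pow_ne_zero 2 hj)]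

theorem ValuationSubring.exists_residue_sum_sq_eq_zero {K : Type*} [Field K]
    (A : ValuationSubring K) {ι : Type*} [Fintype ι] {y : ι → K} (hy : y ≠ 0)
    (h : ∑ i, y i ^ 2 = 0) : ∃ z : ι → ResidueField A, z ≠ 0 ∧ ∑ i, z i ^ 2 = 0 := by
  obtain ⟨i₀, -⟩ := Function.ne_iff.mp hy
  obtain ⟨j, -, hmax⟩ := Finset.exists_max_image Finset.univ (fun i => A.valuation (y i))
    ⟨i₀, Finset.mem_univ _⟩
  have hyj : y j ≠ 0 := by
    intro h0
    apply hy
    funext i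
    simpa [h0] using hmax i (Finset.mem_univ i)
  have hu (i : ι) : y i / y j ∈ A := by
    rw [← A.valuation_le_one_iff, map_div₀]
    exact div_le_one_of_le₀ (hmax i (Finset.mem_univ i)) zero_le
  set u : ι → A := fun i => ⟨y i / y j, hu i⟩
  have hu0 : ∑ i, u i ^ 2 = 0 := by
    apply Subtype.ext
    simp [u, div_pow, ← Finset.sum_div, h]
  refine ⟨fun i => residue A (u i), Function.ne_iff.mpr ⟨j, ?_⟩,
    by simp [← map_pow, ← map_sum, hu0]⟩
  have : u j = 1 := Subtype.ext (div_self hyj)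
  simp [this]

theorem ValuationSubring.isSumSqN_neg_one_residue_of_isSumSqN_neg_one {K : Type*} [Field K]
    (A : ValuationSubring K) {m : ℕ} (h : IsSumSqN m (-1 : K)) :
    IsSumSqN m (-1 : ResidueField A) := by
  obtain ⟨y, hy, hsum⟩ := exists_sum_sq_eq_zero_of_isSumSqN_neg_one h
  obtain ⟨z, hz, hzsum⟩ := A.exists_residue_sum_sq_eq_zero hy hsum
  exact isSumSqN_neg_one_of_sum_sq_eq_zero hz hzsum

theorem HenselianLocalRing.isSquare_of_residue_eq_one {R : Type*} [CommRing R]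
    [HenselianLocalRing R] (h2 : IsUnit (2 : R)) {a : R} (ha : residue R a = 1) : IsSquare a := by
  obtain ⟨b, hb, -⟩ :=
    is_henselian (X ^ 2 - C a) (monic_X_pow_sub_C a two_ne_zero) 1
        (by rw [← residue_eq_zero_iff]; simp [ha]) (by simpa [one_add_one_eq_two] using h2)
  have : b ^ 2 - a = 0 := by simpa using hb
  exact ⟨b, by rw [← sq, sub_eq_zero.mp this]⟩

theorem HenselianLocalRing.isSumSqN_neg_one_of_residue {R : Type*} [CommRing R]
    [HenselianLocalRing R] (h2 : IsUnit (2 : R)) {m : ℕ} (h : IsSumSqN m (-1 : ResidueField R)) :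
    IsSumSqN m (-1 : R) := by
  obtain ⟨y, hy⟩ := h
  choose x hx using fun i => residue_surjective (y i)
  set a := -∑ i, x i ^ 2
  have ha : residue R a = 1 := by simp [a, hx, ← hy]
  obtain ⟨b, hb⟩ := isSquare_of_residue_eq_one h2 ha
  have hbu : IsUnit b := by
    rw [← residue_ne_zero_iff_isUnit]
    intro h0
    simp [hb, h0] at ha
  refine ⟨fun i => x i * ↑hbu.unit⁻¹, ?_⟩
  have hsum : ∑ i, x i ^ 2 = -(b * b) := by rw [← hb, neg_neg]
  simp only [mul_pow, ← Finset.sum_mul]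
  rw [hsum, neg_mul, ← sq, ← mul_pow, IsUnit.mul_val_inv, one_pow]

/-- For a henselian valuation with residue characteristic not 2, `s(K) = s(Kv)`. -/
theorem level_eq_level_residue_of_henselian {K : Type*} [Field K] {Γ₀ : Type*}
    [LinearOrderedCommGroupWithZero Γ₀] (v : Valuation K Γ₀)
    [HenselianLocalRing v.valuationSubring]
    (h2 : ringChar (IsLocalRing.ResidueField v.valuationSubring) ≠ 2) :
    levelN K = levelN (IsLocalRing.ResidueField v.valuationSubring) := by
  have h2A : IsUnit (2 : v.valuationSubring) := by
    rw [← residue_ne_zero_iff_isUnit, map_ofNat]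
    exact Ring.two_ne_zero h2
  refine levelN_congr fun m =>
    ⟨v.valuationSubring.isSumSqN_neg_one_residue_of_isSumSqN_neg_one, fun h => ?_⟩
  simpa using (HenselianLocalRing.isSumSqN_neg_one_of_residue h2A h).map v.valuationSubring.subtype
end

section
/- Let K be a field of characteristic not 2 and a ∈ K a nonzero sum of squares. If the (n+1)-fold Pfister form 2^n × ⟨1, −a⟩ is hyperbolic over K, then a is a sum of 2^n squares in K. -/
/-- The hyperbolic diagonal form `m × ⟨1,-1⟩` over `K`. -/
noncomputable def hypForm (K : Type*) [Field K] (m : ℕ) :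
    QuadraticForm K (Fin m ⊕ Fin m → K) :=
  QuadraticMap.weightedSumSquares K (Sum.elim (fun _ => (1 : K)) (fun _ => (-1 : K)))

/-- A quadratic form is hyperbolic if it is isometric to some `m × ⟨1,-1⟩`. -/
def IsHypForm {K : Type*} [Field K] {ι : Type*} [Fintype ι]
    (q : QuadraticForm K (ι → K)) : Prop :=
  ∃ m, QuadraticMap.Equivalent q (hypForm K m)

/-! Hyperbolicity makes `2^n × ⟨1,-a⟩` isotropic: there are `x, y`, not both zero, with
`∑ xᵢ² = a ∑ yᵢ²`. If `∑ yᵢ² ≠ 0`, then `a = (∑ xᵢ²)(∑ yᵢ²) / (∑ yᵢ²)²`, and nonzero sums of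
`2^n` squares are closed under multiplication (Pfister), so `a` is a sum of `2^n` squares.
Otherwise `2^n × ⟨1⟩` is isotropic, hence universal since `2 ≠ 0`. -/

section CommRing

variable {R : Type*} [CommRing R]

theorem add_mul_sum_sq_add_mul_mul_sum_sq {m : ℕ} (p q : R) (u v : Fin m → R) :
    (p + q) * (∑ i, u i ^ 2 + p * q * ∑ i, v i ^ 2) =
      p * ∑ i, (u i + q * v i) ^ 2 + q * ∑ i, (u i - p * v i) ^ 2 := by
  simp only [Finset.mul_sum, ← Finset.sum_add_distrib]
  exact Finset.sum_congr rfl fun i _ => by ring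

theorem weightedSumSquares_one_neg_apply {k : ℕ} (a : R) (v : Fin k × Fin 2 → R) :
    QuadraticMap.weightedSumSquares R (fun p : Fin k × Fin 2 => if p.2 = 0 then (1 : R) else -a) v
      = ∑ i, v (i, 0) ^ 2 - a * ∑ i, v (i, 1) ^ 2 := by
  simp [QuadraticMap.weightedSumSquares_apply, Fintype.sum_prod_type, Fin.sum_univ_two,
    Finset.mul_sum, Finset.sum_sub_distrib, sq, ← sub_eq_add_neg]

namespace IsSumSqN

theorem add_iff {m k : ℕ} {a : R} :
    IsSumSqN (m + k) a ↔ ∃ p q, IsSumSqN m p ∧ IsSumSqN k q ∧ a = p + q := by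
  constructor
  · rintro ⟨x, rfl⟩
    exact ⟨_, _, ⟨fun i => x (Fin.castAdd k i), rfl⟩, ⟨fun i => x (Fin.natAdd m i), rfl⟩,
      Fin.sum_univ_add _⟩
  · rintro ⟨p, q, ⟨x, rfl⟩, ⟨y, rfl⟩, rfl⟩
    exact ⟨Fin.append x y, by simp [Fin.sum_univ_add]⟩

theorem add {m k : ℕ} {p q : R} (hp : IsSumSqN m p) (hq : IsSumSqN k q) :
    IsSumSqN (m + k) (p + q) :=
  add_iff.2 ⟨p, q, hp, hq, rfl⟩

theorem sq_mul {m : ℕ} {a : R} (c : R) (h : IsSumSqN m a) : IsSumSqN m (c ^ 2 * a) := by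
  obtain ⟨x, rfl⟩ := h
  exact ⟨fun i => c * x i, by simp [mul_pow, Finset.mul_sum]⟩

end IsSumSqN

end CommRing

section Field

variable {K : Type*} [Field K]

/-- If `p q ≠ 0`, then `β = p q β'` with `β'` again a sum of `m` squares, and
`add_mul_sum_sq_add_mul_mul_sum_sq` applies. -/
theorem IsSumSqN.add_mul_add {m : ℕ}
    (hmul : ∀ s t : K, IsSumSqN m s → IsSumSqN m t → IsSumSqN m (s * t))
    {p q α β : K} (hp : IsSumSqN m p) (hq : IsSumSqN m q) (hα : IsSumSqN m α)
    (hβ : IsSumSqN m β) : IsSumSqN (m + m) ((p + q) * (α + β)) := by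
  by_cases hpq : p * q = 0
  · have hsum : IsSumSqN m (p + q) := by
      rcases mul_eq_zero.1 hpq with rfl | rfl
      · simpa using hq
      · simpa using hp
    rw [mul_add]
    exact (hmul _ _ hsum hα).add (hmul _ _ hsum hβ)
  · obtain ⟨hp0, hq0⟩ := mul_ne_zero_iff.1 hpq
    obtain ⟨u, rfl⟩ := hα
    obtain ⟨v, hv⟩ := (hmul _ _ (hmul _ _ hβ hp) hq).sq_mul (p * q)⁻¹
    have hβ' : β = p * q * ∑ i, v i ^ 2 := by
      rw [← hv]
      field_simp
    rw [hβ', add_mul_sum_sq_add_mul_mul_sum_sq]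
    exact (hmul _ _ hp ⟨_, rfl⟩).add (hmul _ _ hq ⟨_, rfl⟩)

theorem IsSumSqN.mul {n : ℕ} {s t : K} (hs : IsSumSqN (2 ^ n) s) (ht : IsSumSqN (2 ^ n) t) :
    IsSumSqN (2 ^ n) (s * t) := by
  induction n generalizing s t with
  | zero =>
    obtain ⟨x, rfl⟩ := hs
    obtain ⟨y, rfl⟩ := ht
    exact ⟨fun i => x i * y i, by simp [mul_pow]⟩
  | succ n ih =>
    rw [pow_succ, mul_two] at hs ht ⊢
    obtain ⟨p, q, hp, hq, rfl⟩ := IsSumSqN.add_iff.1 hs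
    obtain ⟨α, β, hα, hβ, rfl⟩ := IsSumSqN.add_iff.1 ht
    exact IsSumSqN.add_mul_add (fun _ _ => ih) hp hq hα hβ

/-- An isotropic vector `z` of `m × ⟨1⟩` with `z j ≠ 0` gives
`b = ∑ (c z i + δ i j)^2 = 2 c z j + 1` for `c = (b - 1) / (2 z j)`. -/
theorem isSumSqN_of_sum_sq_eq_zero (h2 : (2 : K) ≠ 0) {m : ℕ} {z : Fin m → K} (hz : z ≠ 0)
    (h0 : ∑ i, z i ^ 2 = 0) (b : K) : IsSumSqN m b := by
  obtain ⟨j, hj⟩ := Function.ne_iff.1 hz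
  set c := (b - 1) / (2 * z j)
  have hc : 2 * c * z j = b - 1 := by
    rw [Pi.zero_apply] at hj
    simp only [c]
    field_simp
  refine ⟨fun i => c * z i + if i = j then 1 else 0, ?_⟩
  calc b = c ^ 2 * ∑ i, z i ^ 2 + 2 * c * z j + 1 := by
        rw [h0, hc]
        ring
    _ = ∑ i, (c * z i + if i = j then 1 else 0) ^ 2 := by
        simp [add_sq, Finset.sum_add_distrib, mul_pow, Finset.mul_sum, mul_ite, mul_assoc]

theorem IsHypForm.not_anisotropic {ι : Type*} [Fintype ι] [Nonempty ι]
    {q : QuadraticForm K (ι → K)} (h : IsHypForm q) : ¬ q.Anisotropic := by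
  obtain ⟨m, ⟨e⟩⟩ := h
  rcases Nat.eq_zero_or_pos m with rfl | hm
  · exact absurd e.toLinearEquiv.toEquiv.subsingleton (not_subsingleton _)
  intro hq
  have hw : hypForm K m (fun _ => 1) = 0 := by
    simp [hypForm, QuadraticMap.weightedSumSquares_apply, Fintype.sum_sum_type]
  have := hq (e.symm fun _ => 1) (by rwa [e.symm.map_app])
  rw [map_eq_zero_iff _ (EquivLike.injective _)] at this
  exact one_ne_zero (congrFun this (Sum.inl ⟨0, hm⟩))

theorem isSumSqN_of_sum_sq_eq_mul_sum_sq (h2 : (2 : K) ≠ 0) {n : ℕ} {a : K}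
    {x y : Fin (2 ^ n) → K} (hxy : x ≠ 0 ∨ y ≠ 0)
    (h : ∑ i, x i ^ 2 = a * ∑ i, y i ^ 2) : IsSumSqN (2 ^ n) a := by
  by_cases hy : ∑ i, y i ^ 2 = 0
  · rw [hy, mul_zero] at h
    rcases hxy with hx | hy'
    · exact isSumSqN_of_sum_sq_eq_zero h2 hx h a
    · exact isSumSqN_of_sum_sq_eq_zero h2 hy' hy a
  · have hprod : IsSumSqN (2 ^ n) ((∑ i, x i ^ 2) * ∑ i, y i ^ 2) :=
      .mul ⟨x, rfl⟩ ⟨y, rfl⟩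
    convert hprod.sq_mul (∑ i, y i ^ 2)⁻¹ using 1
    rw [h]
    field_simp

end Field

theorem sumSq_two_pow_of_pfister_hyperbolic_general (K : Type*) [Field K] (h2 : ringChar K ≠ 2)
    (n : ℕ) (a : K)
    (hhyp : IsHypForm (QuadraticMap.weightedSumSquares K
      (fun p : Fin (2 ^ n) × Fin 2 => if p.2 = 0 then (1 : K) else -a))) :
    IsSumSqN (2 ^ n) a := by
  obtain ⟨v, hv0, hv⟩ := (QuadraticMap.not_anisotropic_iff_exists _).1 hhyp.not_anisotropic
  rw [weightedSumSquares_one_neg_apply, sub_eq_zero] at hv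
  refine isSumSqN_of_sum_sq_eq_mul_sum_sq (Ring.two_ne_zero h2) ?_ hv
  by_contra! hxy
  refine hv0 (funext fun ⟨i, j⟩ => ?_)
  fin_cases j
  exacts [congrFun hxy.1 i, congrFun hxy.2 i]

/-- If `2^n × ⟨1,-a⟩` is hyperbolic over a field of characteristic not 2, then the nonzero
sum of squares `a` is a sum of `2^n` squares. -/
theorem sumSq_two_pow_of_pfister_hyperbolic (K : Type*) [Field K] (h2 : ringChar K ≠ 2)
    (n : ℕ) (a : K) (ha : a ≠ 0) (hsos : IsSOS a)
    (hhyp : IsHypForm (QuadraticMap.weightedSumSquares K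
      (fun p : Fin (2 ^ n) × Fin 2 => if p.2 = 0 then (1 : K) else -a))) :
    IsSumSqN (2 ^ n) a :=
  sumSq_two_pow_of_pfister_hyperbolic_general K h2 n a hhyp
end
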